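/- arXiv:1409.6463 — 2 statements merged into one kernel-verified Lean document; each statement's English description precedes it below -/
import Mathlib

section
/- Let (E,d) be a complete uniform SR (Staples rotund) metric space and let (x_n) be a bounded sequence in E. Then (x_n) admits a unique asymptotic center, i.e. the functional I(y) = limsup_n d(x_n,y) has exactly one minimum point x̄; moreover, every minimizing sequence of I converges in the metric to x̄. -/
open Filter Metric ENNReal MeasureTheory

noncomputable section

variable {E : Type*} [MetricSpace E]

/-- A sequence `x` Δ-converges to `p`: for every subsequence and every `y`,
`limsup d(x_{k_n}, p) ≤ limsup d(x_{k_n}, y)`. -/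
def DeltaConv (x : ℕ → E) (p : E) : Prop :=
  ∀ k : ℕ → ℕ, StrictMono k → ∀ y : E,
    Filter.limsup (fun n => edist (x (k n)) p) Filter.atTop ≤
      Filter.limsup (fun n => edist (x (k n)) y) Filter.atTop

/-- A sequence `x` strong-Δ converges to `p`: `lim d(x_n,p)` exists and for every `y`,
`lim d(x_n,p) ≤ liminf d(x_n,y)`. -/
def StrongDeltaConv (x : ℕ → E) (p : E) : Prop :=
  ∃ r : ℝ, Filter.Tendsto (fun n => dist (x n) p) Filter.atTop (nhds r) ∧
    ∀ y : E, r ≤ Filter.liminf (fun n => dist (x n) y) Filter.atTop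

/-- `p` is a polar limit of the sequence `x`: for every `y ≠ p`, eventually
`d(x_n,p) < d(x_n,y)`. -/
def PolarLim (x : ℕ → E) (p : E) : Prop :=
  ∀ y : E, y ≠ p → ∃ M : ℕ, ∀ n ≥ M, dist (x n) p < dist (x n) y

/-- `c` is an asymptotic center of the sequence `x`: it minimizes
`I(y) = limsup d(x_n, y)`. -/
def AsympCenter (x : ℕ → E) (c : E) : Prop :=
  ∀ y : E, Filter.limsup (fun n => dist (x n) c) Filter.atTop ≤
    Filter.limsup (fun n => dist (x n) y) Filter.atTop

/-- A metric space is Δ-complete if every bounded sequence admits an asymptotic center. -/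
def DeltaComplete (E : Type*) [MetricSpace E] : Prop :=
  ∀ x : ℕ → E, Bornology.IsBounded (Set.range x) → ∃ c : E, AsympCenter x c

/-- The Chebyshev radius of a set `X`: `inf_z sup_{w ∈ X} d(z,w)`. -/
def chebyshevRadius (X : Set E) : ℝ≥0∞ :=
  ⨅ z : E, ⨆ w ∈ X, edist z w

/-- A metric space is a uniform SR (Staples rotund) space if there is
`δ : (0,∞)² → (0,∞)` such that for all `r, d̄ > 0` and all `x, y` with `d(x,y) ≥ d̄`,
the Chebyshev radius of `B_{r+δ}(x) ∩ B_{r+δ}(y)` is at most `r − δ`. -/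
def IsUniformSR (E : Type*) [MetricSpace E] : Prop :=
  ∃ δ : ℝ → ℝ → ℝ,
    (∀ r dbar : ℝ, 0 < r → 0 < dbar → 0 < δ r dbar) ∧
    ∀ r dbar : ℝ, 0 < r → 0 < dbar → ∀ x y : E, dbar ≤ dist x y →
      chebyshevRadius
          (Metric.closedBall x (r + δ r dbar) ∩ Metric.closedBall y (r + δ r dbar)) ≤
        ENNReal.ofReal (r - δ r dbar)

/-!
The functional `I(y) = limsup d(xₙ, y)` is 1-Lipschitz and, by uniform rotundity, its sublevel
sets `{I < inf I + ε}` have diameters tending to `0`: two points `y, z` at distance `≥ d̄` with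
`I(y), I(z) < inf I + δ` would force `xₙ` eventually into `B_{r+δ}(y) ∩ B_{r+δ}(z)` with
`r = inf I`, and a Chebyshev center of that intersection would have `I < inf I`.
For a continuous function with shrinking sublevel sets on a complete space, minimizing sequences
are Cauchy, their common limit is the unique minimizer, and they all converge to it.
-/

open Topology Set

section SublevelSetsShrink

/-- The Furi–Vignoli condition: `diam {f < inf f + ε} → 0` as `ε → 0`. -/
def SublevelSetsShrink (f : E → ℝ) : Prop :=
  ∀ d > 0, ∃ ε > 0, ∀ y z, f y < (⨅ w, f w) + ε → f z < (⨅ w, f w) + ε → dist y z < d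

variable {f : E → ℝ}

theorem SublevelSetsShrink.tendsto_of_tendsto_iInf (hf : SublevelSetsShrink f) {c : E}
    (hc : f c ≤ ⨅ w, f w) {y : ℕ → E} (hy : Tendsto (f ∘ y) atTop (𝓝 (⨅ w, f w))) :
    Tendsto y atTop (𝓝 c) := by
  rw [Metric.tendsto_atTop]
  intro d hd
  obtain ⟨ε, hε, hshrink⟩ := hf d hd
  obtain ⟨N, hN⟩ := eventually_atTop.mp (hy.eventually_lt_const (lt_add_of_pos_right _ hε))
  exact ⟨N, fun n hn => hshrink _ _ (hN n hn) (by linarith)⟩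

theorem SublevelSetsShrink.cauchySeq (hf : SublevelSetsShrink f) {y : ℕ → E}
    (hy : Tendsto (f ∘ y) atTop (𝓝 (⨅ w, f w))) : CauchySeq y := by
  rw [Metric.cauchySeq_iff]
  intro d hd
  obtain ⟨ε, hε, hshrink⟩ := hf d hd
  obtain ⟨N, hN⟩ := eventually_atTop.mp (hy.eventually_lt_const (lt_add_of_pos_right _ hε))
  exact ⟨N, fun m hm n hn => hshrink _ _ (hN m hm) (hN n hn)⟩

theorem SublevelSetsShrink.eq_of_le_iInf (hf : SublevelSetsShrink f) {c c' : E}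
    (hc : f c ≤ ⨅ w, f w) (hc' : f c' ≤ ⨅ w, f w) : c = c' := by
  by_contra hne
  obtain ⟨ε, hε, hshrink⟩ := hf _ (dist_pos.mpr hne)
  exact lt_irrefl _ (hshrink c c' (by linarith) (by linarith))

theorem SublevelSetsShrink.exists_le_iInf [CompleteSpace E] [Nonempty E]
    (hf : SublevelSetsShrink f) (hcont : Continuous f) (hbdd : BddBelow (range f)) :
    ∃ c, f c ≤ ⨅ w, f w := by
  obtain ⟨u, -, hu, hmem⟩ := exists_seq_tendsto_sInf (range_nonempty f) hbdd
  choose y hy using hmem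
  have hfy : Tendsto (f ∘ y) atTop (𝓝 (⨅ w, f w)) := by
    simpa only [Function.comp_def, hy, sInf_range] using hu
  obtain ⟨c, hc⟩ := cauchySeq_tendsto_of_complete (hf.cauchySeq hfy)
  exact ⟨c, (tendsto_nhds_unique ((hcont.tendsto c).comp hc) hfy).le⟩

end SublevelSetsShrink

section AsymptoticRadius

def asymptoticRadius (x : ℕ → E) (y : E) : ℝ :=
  limsup (fun n => dist (x n) y) atTop

variable {x : ℕ → E}

theorem isBoundedUnder_le_dist (hb : Bornology.IsBounded (range x)) (y : E) :
    IsBoundedUnder (· ≤ ·) atTop (fun n => dist (x n) y) := by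
  obtain ⟨r, hr⟩ := hb.subset_closedBall y
  exact isBoundedUnder_of ⟨r, fun n => hr (mem_range_self n)⟩

theorem isCoboundedUnder_le_dist (y : E) :
    IsCoboundedUnder (· ≤ ·) atTop (fun n => dist (x n) y) :=
  (isBoundedUnder_of ⟨0, fun _ => dist_nonneg⟩).isCoboundedUnder_le

theorem asymptoticRadius_nonneg (hb : Bornology.IsBounded (range x)) (y : E) :
    0 ≤ asymptoticRadius x y :=
  le_limsup_of_le (isBoundedUnder_le_dist hb y) fun _ h =>
    let ⟨_, hn⟩ := h.exists; dist_nonneg.trans hn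

theorem bddBelow_range_asymptoticRadius (hb : Bornology.IsBounded (range x)) :
    BddBelow (range (asymptoticRadius x)) :=
  ⟨0, by rintro _ ⟨y, rfl⟩; exact asymptoticRadius_nonneg hb y⟩

theorem asymptoticRadius_le_add_dist (hb : Bornology.IsBounded (range x)) (y z : E) :
    asymptoticRadius x y ≤ asymptoticRadius x z + dist y z := by
  have hbd : IsBoundedUnder (· ≤ ·) atTop (fun n => dist (x n) z + dist z y) :=
    isBoundedUnder_le_add (isBoundedUnder_le_dist hb z) isBoundedUnder_const
  calc asymptoticRadius x y
      ≤ limsup (fun n => dist (x n) z + dist z y) atTop :=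
        limsup_le_limsup (.of_forall fun _ => dist_triangle _ _ _)
          (isCoboundedUnder_le_dist y) hbd
    _ = asymptoticRadius x z + dist y z := by
        rw [limsup_add_const _ _ _ (isBoundedUnder_le_dist hb z) (isCoboundedUnder_le_dist z),
          dist_comm]
        rfl

theorem lipschitzWith_asymptoticRadius (hb : Bornology.IsBounded (range x)) :
    LipschitzWith 1 (asymptoticRadius x) :=
  LipschitzWith.of_le_add (asymptoticRadius_le_add_dist hb)

theorem dist_le_asymptoticRadius_add (hb : Bornology.IsBounded (range x)) (y z : E) :
    dist y z ≤ asymptoticRadius x y + asymptoticRadius x z := by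
  rw [← sub_le_iff_le_add']
  refine le_limsup_of_le (isBoundedUnder_le_dist hb z) fun b hz => ?_
  rw [sub_le_iff_le_add, ← sub_le_iff_le_add']
  refine le_limsup_of_le (isBoundedUnder_le_dist hb y) fun b' hy => ?_
  obtain ⟨n, hnz, hny⟩ := (hz.and hy).exists
  linarith [dist_triangle_left y z (x n)]

theorem eventually_mem_closedBall_of_asymptoticRadius_lt (hb : Bornology.IsBounded (range x))
    {y : E} {r : ℝ} (h : asymptoticRadius x y < r) : ∀ᶠ n in atTop, x n ∈ closedBall y r :=
  (eventually_lt_of_limsup_lt h (isBoundedUnder_le_dist hb y)).mono fun _ hn =>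
    mem_closedBall.mpr hn.le

theorem exists_asymptoticRadius_le_of_chebyshevRadius_lt {X : Set E} {ρ : ℝ}
    (hX : ∀ᶠ n in atTop, x n ∈ X) (h : chebyshevRadius X < ENNReal.ofReal ρ) :
    ∃ w, asymptoticRadius x w ≤ ρ := by
  obtain ⟨w, hw⟩ := iInf_lt_iff.mp h
  refine ⟨w, limsup_le_of_le (isCoboundedUnder_le_dist w) ?_⟩
  filter_upwards [hX] with n hn
  have hlt : edist w (x n) < ENNReal.ofReal ρ :=
    (le_iSup₂ (f := fun u (_ : u ∈ X) => edist w u) (x n) hn).trans_lt hw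
  rw [edist_dist, ENNReal.ofReal_lt_ofReal_iff_of_nonneg dist_nonneg, dist_comm] at hlt
  exact hlt.le

theorem IsUniformSR.sublevelSetsShrink_asymptoticRadius (hSR : IsUniformSR E)
    (hb : Bornology.IsBounded (range x)) : SublevelSetsShrink (asymptoticRadius x) := by
  intro d hd
  have : Nonempty E := ⟨x 0⟩
  set L := ⨅ w, asymptoticRadius x w
  have hbdd := bddBelow_range_asymptoticRadius hb
  rcases (le_ciInf (asymptoticRadius_nonneg hb) : 0 ≤ L).eq_or_lt with hL | hL
  · refine ⟨d / 2, half_pos hd, fun y z hy hz => ?_⟩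
    linarith [dist_le_asymptoticRadius_add hb y z]
  obtain ⟨δ, hδpos, hδ⟩ := hSR
  have hδ0 := hδpos L d hL hd
  refine ⟨δ L d, hδ0, fun y z hy hz => ?_⟩
  by_contra! hyz
  have hX : ∀ᶠ n in atTop,
      x n ∈ closedBall y (L + δ L d) ∩ closedBall z (L + δ L d) :=
    (eventually_mem_closedBall_of_asymptoticRadius_lt hb hy).and
      (eventually_mem_closedBall_of_asymptoticRadius_lt hb hz)
  -- `ρ > 0` so that `ENNReal.ofReal` still separates `L - δ` from `ρ`
  set ρ := max (L - δ L d / 2) (L / 2)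
  have hρL : ρ < L := max_lt (by linarith) (by linarith)
  have hcheb := (hδ L d hL hd y z hyz).trans_lt
    ((ENNReal.ofReal_lt_ofReal_iff (by positivity)).2
      (lt_max_of_lt_left (by linarith) : L - δ L d < ρ))
  obtain ⟨w, hw⟩ := exists_asymptoticRadius_le_of_chebyshevRadius_lt hX hcheb
  linarith [ciInf_le hbdd w]

end AsymptoticRadius

/-- in a complete uniform SR space, every bounded sequence has a unique
asymptotic center, and every minimizing sequence of `I` converges to it. -/
theorem stmt_14 [CompleteSpace E] (hSR : IsUniformSR E) (x : ℕ → E)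
    (hb : Bornology.IsBounded (Set.range x)) :
    ∃ c : E, AsympCenter x c ∧ (∀ c' : E, AsympCenter x c' → c' = c) ∧
      ∀ y : ℕ → E,
        Filter.Tendsto (fun k => Filter.limsup (fun n => dist (x n) (y k)) Filter.atTop)
          Filter.atTop
          (nhds (⨅ z : E, Filter.limsup (fun n => dist (x n) z) Filter.atTop)) →
        Filter.Tendsto y Filter.atTop (nhds c) := by
  have : Nonempty E := ⟨x 0⟩
  have hshrink := hSR.sublevelSetsShrink_asymptoticRadius hb
  have hbdd := bddBelow_range_asymptoticRadius hb
  obtain ⟨c, hc⟩ := hshrink.exists_le_iInf (lipschitzWith_asymptoticRadius hb).continuous hbdd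
  exact ⟨c, fun y => hc.trans (ciInf_le hbdd y),
    fun c' hc' => hshrink.eq_of_le_iInf ((hc' c).trans hc) hc,
    fun y hy => hshrink.tendsto_of_tendsto_iInf hc hy⟩
end
end

section
/- Let (E,d) be a bounded complete uniform SR (Staples rotund) metric space, let x ∈ E and let T : E → E be a nonexpansive map. Then the following are equivalent: (a) the iterations sequence (Tⁿ(x))_{n∈ℕ} has a polar limit; (b) whenever a subsequence of (Tⁿ(x))_{n∈ℕ} has a polar limit y, the point y is a fixed point of T (i.e. T(y) = y). -/
open Filter Metric ENNReal MeasureTheory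

noncomputable section

variable {E : Type*} [MetricSpace E]

/-! Uniform rotundity forces near-minimisers of `z ↦ limsup d(yₙ, z)` to be close to each other,
so in a complete space every sequence has a unique asymptotic center. A polar limit is the
asymptotic center of every subsequence, and a point that is the asymptotic center of every
subsequence is a polar limit; a diagonal argument gives every sequence a subsequence whose
asymptotic radius does not drop along further subsequences, and its center is then a polar limit.

(a) ⇒ (b): `T` maps the asymptotic center `p` of the orbit to an asymptotic center, so `T p = p`,
and `p` is also the center of every subsequence. (b) ⇒ (a): `d(Tⁿx, q)` converges for every fixed
point `q`, so `limsup d(Tⁿx, q)` is the same along all subsequences; comparing the polar limit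
`p` of one subsequence with that of a sub-subsequence of an arbitrary subsequence shows that `p`
is the asymptotic center of every subsequence. -/

def limsupDist (y : ℕ → E) (z : E) : ℝ :=
  limsup (fun n => dist (y n) z) atTop

def asympRadius (y : ℕ → E) : ℝ :=
  ⨅ z, limsupDist y z

def subseqAsympRadius (y : ℕ → E) : ℝ :=
  ⨅ φ : {φ : ℕ → ℕ // Tendsto φ atTop atTop}, asympRadius (y ∘ φ)

def AsympRegular (y : ℕ → E) : Prop :=
  ∀ φ : ℕ → ℕ, Tendsto φ atTop atTop → asympRadius y ≤ asympRadius (y ∘ φ)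

theorem diagonal_of_nested_subseq {K : ℕ → ℕ → ℕ} (hK₀ : StrictMono (K 0))
    (hK : ∀ i, ∃ ψ, StrictMono ψ ∧ K (i + 1) = K i ∘ ψ) :
    StrictMono (fun j => K j j) ∧
      ∀ i, ∃ φ, Tendsto φ atTop atTop ∧ ∀ j ≥ i, K j j = K i (φ j) := by
  have hnest : ∀ i j, i ≤ j → ∃ Ψ, StrictMono Ψ ∧ K j = K i ∘ Ψ := by
    intro i j hij
    induction j, hij using Nat.le_induction with
    | base => exact ⟨id, strictMono_id, rfl⟩
    | succ j _ ih =>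
      obtain ⟨Ψ, hΨ, hKj⟩ := ih
      obtain ⟨ψ, hψ, hKsucc⟩ := hK j
      exact ⟨Ψ ∘ ψ, hΨ.comp hψ, by rw [hKsucc, hKj]; rfl⟩
  constructor
  · refine strictMono_nat_of_lt_succ fun j => ?_
    obtain ⟨ψ, hψ, hKsucc⟩ := hK j
    obtain ⟨Ψ, hΨ, hKj⟩ := hnest 0 j j.zero_le
    have hKj_mono : StrictMono (K j) := hKj ▸ hK₀.comp hΨ
    rw [hKsucc]
    exact hKj_mono ((Nat.lt_succ_self j).trans_le (hψ.id_le _))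
  · intro i
    choose Ψ hΨ hKΨ using hnest i
    refine ⟨fun j => if h : i ≤ j then Ψ j h j else j, tendsto_atTop_mono (fun j => ?_) tendsto_id,
      fun j hj => by simp only [dif_pos hj, hKΨ j hj, Function.comp_apply]⟩
    split_ifs with h
    · exact (hΨ j h).id_le j
    · exact le_rfl

theorem limsupDist_le_of_eventually_le {y : ℕ → E} {z : E} {a : ℝ}
    (h : ∀ᶠ n in atTop, dist (y n) z ≤ a) : limsupDist y z ≤ a :=
  limsup_le_of_le (isCoboundedUnder_le_of_le atTop fun _ => dist_nonneg) h

theorem limsupDist_congr {y y' : ℕ → E} (h : y =ᶠ[atTop] y') (z : E) :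
    limsupDist y z = limsupDist y' z :=
  limsup_congr (h.mono fun n hn => by rw [hn])

theorem limsupDist_add_nat (y : ℕ → E) (z : E) (N : ℕ) :
    limsupDist (fun n => y (n + N)) z = limsupDist y z :=
  limsup_nat_add (fun n => dist (y n) z) N

theorem asympRadius_congr {y y' : ℕ → E} (h : y =ᶠ[atTop] y') : asympRadius y = asympRadius y' := by
  simp only [asympRadius, limsupDist_congr h]

section BoundedSpace

variable [BoundedSpace E]

theorem isBoundedUnder_dist (y : ℕ → E) (z : E) :
    IsBoundedUnder (· ≤ ·) atTop (fun n => dist (y n) z) :=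
  isBoundedUnder_of ⟨diam (Set.univ : Set E), fun _ =>
    dist_le_diam_of_mem BoundedSpace.bounded_univ (Set.mem_univ _) (Set.mem_univ _)⟩

theorem limsupDist_nonneg (y : ℕ → E) (z : E) : 0 ≤ limsupDist y z :=
  le_limsup_of_frequently_le (Frequently.of_forall fun _ => dist_nonneg) (isBoundedUnder_dist y z)

theorem eventually_dist_lt_of_limsupDist_lt {y : ℕ → E} {z : E} {a : ℝ}
    (h : limsupDist y z < a) : ∀ᶠ n in atTop, dist (y n) z < a :=
  eventually_lt_of_limsup_lt h (isBoundedUnder_dist y z)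

theorem limsupDist_mono {y w : ℕ → E} {z u : E}
    (h : ∀ᶠ n in atTop, dist (y n) z ≤ dist (w n) u) : limsupDist y z ≤ limsupDist w u :=
  limsup_le_limsup h (isCoboundedUnder_le_of_le atTop fun _ => dist_nonneg)
    (isBoundedUnder_dist w u)

theorem limsupDist_comp_le (y : ℕ → E) (z : E) {φ : ℕ → ℕ} (hφ : Tendsto φ atTop atTop) :
    limsupDist (y ∘ φ) z ≤ limsupDist y z :=
  limsup_le_limsup_of_le hφ (isCoboundedUnder_le_of_le _ fun _ => dist_nonneg)
    (isBoundedUnder_dist y z)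

theorem limsupDist_le_add_dist (y : ℕ → E) (u v : E) :
    limsupDist y u ≤ limsupDist y v + dist u v := by
  refine le_of_forall_pos_le_add fun ε hε => limsupDist_le_of_eventually_le ?_
  filter_upwards [eventually_dist_lt_of_limsupDist_lt (lt_add_of_pos_right (limsupDist y v) hε)]
    with n hn
  linarith [dist_triangle (y n) v u, dist_comm u v]

theorem lipschitzWith_limsupDist (y : ℕ → E) : LipschitzWith 1 (limsupDist y) :=
  LipschitzWith.of_le_add (limsupDist_le_add_dist y)

theorem dist_le_limsupDist_add (y : ℕ → E) (u v : E) :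
    dist u v ≤ limsupDist y u + limsupDist y v := by
  refine le_of_forall_pos_le_add fun ε hε => ?_
  obtain ⟨n, hu, hv⟩ := ((eventually_dist_lt_of_limsupDist_lt
    (lt_add_of_pos_right (limsupDist y u) (half_pos hε))).and
    (eventually_dist_lt_of_limsupDist_lt
    (lt_add_of_pos_right (limsupDist y v) (half_pos hε)))).exists
  linarith [dist_triangle u (y n) v, dist_comm u (y n)]

theorem bddBelow_range_limsupDist (y : ℕ → E) : BddBelow (Set.range (limsupDist y)) :=
  ⟨0, Set.forall_mem_range.2 (limsupDist_nonneg y)⟩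

theorem asympRadius_le (y : ℕ → E) (z : E) : asympRadius y ≤ limsupDist y z :=
  ciInf_le (bddBelow_range_limsupDist y) z

theorem asympRadius_nonneg (y : ℕ → E) : 0 ≤ asympRadius y :=
  Real.iInf_nonneg (limsupDist_nonneg y)

theorem asympRadius_comp_le (y : ℕ → E) {φ : ℕ → ℕ} (hφ : Tendsto φ atTop atTop) :
    asympRadius (y ∘ φ) ≤ asympRadius y :=
  have : Nonempty E := ⟨y 0⟩
  le_ciInf fun z => (asympRadius_le _ z).trans (limsupDist_comp_le y z hφ)

theorem subseqAsympRadius_le (y : ℕ → E) {φ : ℕ → ℕ} (hφ : Tendsto φ atTop atTop) :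
    subseqAsympRadius y ≤ asympRadius (y ∘ φ) :=
  have hbdd : BddBelow (Set.range fun φ : {φ : ℕ → ℕ // Tendsto φ atTop atTop} =>
      asympRadius (y ∘ φ)) :=
    ⟨0, Set.forall_mem_range.2 fun _ => asympRadius_nonneg _⟩
  ciInf_le hbdd ⟨φ, hφ⟩

theorem exists_strictMono_asympRadius_lt (y : ℕ → E) {ε : ℝ} (hε : 0 < ε) :
    ∃ ψ : ℕ → ℕ, StrictMono ψ ∧ asympRadius (y ∘ ψ) < subseqAsympRadius y + ε := by
  have : Nonempty {φ : ℕ → ℕ // Tendsto φ atTop atTop} := ⟨⟨id, tendsto_id⟩⟩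
  obtain ⟨⟨φ, hφ⟩, hlt⟩ := exists_lt_of_ciInf_lt (lt_add_of_pos_right (subseqAsympRadius y) hε)
  obtain ⟨σ, hσ, hφσ⟩ := strictMono_subseq_of_tendsto_atTop hφ
  exact ⟨φ ∘ σ, hφσ, (asympRadius_comp_le (y ∘ φ) hσ.tendsto_atTop).trans_lt hlt⟩

theorem exists_asympRegular_subseq (y : ℕ → E) :
    ∃ k : ℕ → ℕ, StrictMono k ∧ AsympRegular (y ∘ k) := by
  choose ψ hψ hψ_lt using fun (k : ℕ → ℕ) (i : ℕ) =>
    exists_strictMono_asympRadius_lt (y ∘ k) (Nat.one_div_pos_of_nat (n := i))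
  -- `K (i + 1) = K i ∘ ψ (K i) i`: each step nearly attains `subseqAsympRadius (y ∘ K i)`.
  let K : ℕ → ℕ → ℕ := fun i => Nat.rec id (fun i k => k ∘ ψ k i) i
  obtain ⟨hdiag, hφ⟩ := diagonal_of_nested_subseq (K := K) strictMono_id fun i => ⟨_, hψ (K i) i, rfl⟩
  refine ⟨fun j => K j j, hdiag, fun v hv => le_of_forall_pos_le_add fun ε hε => ?_⟩
  obtain ⟨i, hi⟩ := exists_nat_one_div_lt hε
  obtain ⟨φ, hφ_tendsto, hφ_eq⟩ := hφ i
  obtain ⟨φ', hφ'_tendsto, hφ'_eq⟩ := hφ (i + 1)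
  have hdiag_eq : ∀ {l} (φ : ℕ → ℕ), (∀ j ≥ l, K j j = K l (φ j)) →
      y ∘ (fun j => K j j) =ᶠ[atTop] y ∘ K l ∘ φ := fun φ h =>
    eventually_atTop.2 ⟨_, fun j hj => congrArg y (h j hj)⟩
  calc asympRadius (y ∘ fun j => K j j)
      = asympRadius (y ∘ K (i + 1) ∘ φ') := asympRadius_congr (hdiag_eq φ' hφ'_eq)
    _ ≤ asympRadius (y ∘ K i ∘ ψ (K i) i) := asympRadius_comp_le (y ∘ K (i + 1)) hφ'_tendsto
    _ ≤ subseqAsympRadius (y ∘ K i) + 1 / (i + 1) := (hψ_lt (K i) i).le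
    _ ≤ asympRadius ((y ∘ K i) ∘ (φ ∘ v)) + ε := by
      gcongr
      · exact subseqAsympRadius_le _ (hφ_tendsto.comp hv)
    _ = asympRadius ((y ∘ fun j => K j j) ∘ v) + ε := by
      rw [asympRadius_congr ((hdiag_eq φ hφ_eq).comp_tendsto hv)]
      rfl

theorem IsUniformSR.exists_limsupDist_lt (hSR : IsUniformSR E) {ρ ε : ℝ} (hρ : 0 < ρ)
    (hε : 0 < ε) :
    ∃ δ > 0, ∀ (y : ℕ → E) {u v : E}, ε ≤ dist u v → limsupDist y u < ρ + δ →
      limsupDist y v < ρ + δ → ∃ z, limsupDist y z < ρ := by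
  obtain ⟨δ, hδ_pos, hδ⟩ := hSR
  refine ⟨δ ρ ε, hδ_pos ρ ε hρ hε, fun y u v huv hu hv => ?_⟩
  have hcheb : chebyshevRadius (closedBall u (ρ + δ ρ ε) ∩ closedBall v (ρ + δ ρ ε)) <
      ENNReal.ofReal ρ :=
    (hδ ρ ε hρ hε u v huv).trans_lt
      ((ENNReal.ofReal_lt_ofReal_iff hρ).2 (by linarith [hδ_pos ρ ε hρ hε]))
  obtain ⟨z, hz⟩ := iInf_lt_iff.1 hcheb
  obtain ⟨t, -, hzt, htρ⟩ := ENNReal.lt_iff_exists_real_btwn.1 hz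
  refine ⟨z, (limsupDist_le_of_eventually_le ?_).trans_lt ((ENNReal.ofReal_lt_ofReal_iff hρ).1 htρ)⟩
  filter_upwards [eventually_dist_lt_of_limsupDist_lt hu, eventually_dist_lt_of_limsupDist_lt hv]
    with n hun hvn
  have hzn : edist z (y n) < ENNReal.ofReal t :=
    (le_iSup₂ (f := fun w (_ : w ∈ closedBall u (ρ + δ ρ ε) ∩ closedBall v (ρ + δ ρ ε)) =>
      edist z w) (y n) ⟨hun.le, hvn.le⟩).trans_lt hzt
  exact (dist_comm z (y n) ▸ edist_lt_ofReal.1 hzn).le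

theorem AsympCenter.eq (hSR : IsUniformSR E) {y : ℕ → E} {p q : E} (hp : AsympCenter y p)
    (hq : AsympCenter y q) : p = q := by
  by_contra hpq
  have hpq_rad : limsupDist y p = limsupDist y q := le_antisymm (hp q) (hq p)
  rcases (limsupDist_nonneg y p).eq_or_lt with h0 | h0
  · exact hpq (dist_le_zero.1 (by linarith [dist_le_limsupDist_add y p q]))
  · obtain ⟨δ, hδ, hmid⟩ := hSR.exists_limsupDist_lt h0 (dist_pos.2 hpq)
    obtain ⟨z, hz⟩ := hmid y le_rfl (by linarith) (by linarith)
    exact (hp z).not_gt hz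

theorem IsUniformSR.exists_dist_lt (hSR : IsUniformSR E) (y : ℕ → E) {ε : ℝ} (hε : 0 < ε) :
    ∃ η > 0, ∀ u v : E, limsupDist y u < asympRadius y + η →
      limsupDist y v < asympRadius y + η → dist u v < ε := by
  rcases (asympRadius_nonneg y).eq_or_lt with h0 | h0
  · refine ⟨ε / 2, half_pos hε, fun u v hu hv => ?_⟩
    linarith [dist_le_limsupDist_add y u v]
  · obtain ⟨δ, hδ, hmid⟩ := hSR.exists_limsupDist_lt h0 hε
    refine ⟨δ, hδ, fun u v hu hv => ?_⟩
    by_contra! huv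
    obtain ⟨z, hz⟩ := hmid y huv hu hv
    exact (asympRadius_le y z).not_gt hz

theorem exists_asympCenter [CompleteSpace E] (hSR : IsUniformSR E) (y : ℕ → E) :
    ∃ c, AsympCenter y c := by
  have : Nonempty E := ⟨y 0⟩
  obtain ⟨r, -, hr, hr_mem⟩ :=
    exists_seq_tendsto_sInf (Set.range_nonempty (limsupDist y)) (bddBelow_range_limsupDist y)
  choose z hz using hr_mem
  have hz_tendsto : Tendsto (fun n => limsupDist y (z n)) atTop (nhds (asympRadius y)) := by
    rw [show (fun n => limsupDist y (z n)) = r from funext hz]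
    exact hr
  have hz_cauchy : CauchySeq z := by
    refine Metric.cauchySeq_iff.2 fun ε hε => ?_
    obtain ⟨η, hη, hclose⟩ := hSR.exists_dist_lt y hε
    obtain ⟨N, hN⟩ :=
      eventually_atTop.1 (hz_tendsto.eventually (gt_mem_nhds (lt_add_of_pos_right _ hη)))
    exact ⟨N, fun m hm n hn => hclose _ _ (hN m hm) (hN n hn)⟩
  obtain ⟨c, hc⟩ := cauchySeq_tendsto_of_complete hz_cauchy
  have hc_rad : limsupDist y c = asympRadius y :=
    tendsto_nhds_unique (((lipschitzWith_limsupDist y).continuous.tendsto c).comp hc) hz_tendsto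
  exact ⟨c, fun w => hc_rad.le.trans (asympRadius_le y w)⟩

theorem PolarLim.asympCenter_comp {y : ℕ → E} {p : E} (h : PolarLim y p) {φ : ℕ → ℕ}
    (hφ : Tendsto φ atTop atTop) : AsympCenter (y ∘ φ) p := by
  intro z
  rcases eq_or_ne z p with rfl | hz
  · exact le_rfl
  · obtain ⟨M, hM⟩ := h z hz
    exact limsupDist_mono ((hφ.eventually (eventually_ge_atTop M)).mono fun n hn => (hM _ hn).le)

theorem PolarLim.asympCenter {y : ℕ → E} {p : E} (h : PolarLim y p) : AsympCenter y p :=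
  h.asympCenter_comp tendsto_id

theorem polarLim_of_forall_asympCenter (hSR : IsUniformSR E) {y : ℕ → E} {p : E}
    (h : ∀ k : ℕ → ℕ, StrictMono k → AsympCenter (y ∘ k) p) : PolarLim y p := by
  intro z hz
  by_contra! hfreq
  obtain ⟨k, hk, hkz⟩ := extraction_of_frequently_atTop (frequently_atTop.2 hfreq)
  have hz_center : AsympCenter (y ∘ k) z := fun w =>
    (limsupDist_mono (Eventually.of_forall hkz)).trans (h k hk w)
  exact hz (hz_center.eq hSR (h k hk))

theorem AsympRegular.polarLim (hSR : IsUniformSR E) {y : ℕ → E} (hy : AsympRegular y) {c : E}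
    (hc : AsympCenter y c) : PolarLim y c := by
  have : Nonempty E := ⟨c⟩
  refine polarLim_of_forall_asympCenter hSR fun k hk z => ?_
  calc
    limsupDist (y ∘ k) c ≤ limsupDist y c := limsupDist_comp_le y c hk.tendsto_atTop
    _ ≤ asympRadius y := le_ciInf hc
    _ ≤ asympRadius (y ∘ k) := hy k hk.tendsto_atTop
    _ ≤ limsupDist (y ∘ k) z := asympRadius_le _ z

theorem exists_polarLim_subseq [CompleteSpace E] (hSR : IsUniformSR E) (y : ℕ → E) :
    ∃ k : ℕ → ℕ, StrictMono k ∧ ∃ p, PolarLim (y ∘ k) p := by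
  obtain ⟨k, hk, hreg⟩ := exists_asympRegular_subseq y
  obtain ⟨c, hc⟩ := exists_asympCenter hSR (y ∘ k)
  exact ⟨k, hk, c, hreg.polarLim hSR hc⟩

theorem asympCenter_orbit_map {T : E → E} (hT : ∀ u v, dist (T u) (T v) ≤ dist u v) {x p : E}
    (hp : AsympCenter (fun n => T^[n] x) p) : AsympCenter (fun n => T^[n] x) (T p) := fun w =>
  calc limsupDist (fun n => T^[n] x) (T p)
      = limsupDist (fun n => T^[n + 1] x) (T p) := (limsupDist_add_nat _ _ 1).symm
    _ ≤ limsupDist (fun n => T^[n] x) p := limsupDist_mono <| Eventually.of_forall fun n => by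
      rw [Function.iterate_succ_apply']
      exact hT _ _
    _ ≤ limsupDist (fun n => T^[n] x) w := hp w

end BoundedSpace

theorem limsupDist_orbit_comp_of_fixed {T : E → E} (hT : ∀ u v, dist (T u) (T v) ≤ dist u v)
    (x : E) {q : E} (hq : T q = q) {k : ℕ → ℕ} (hk : Tendsto k atTop atTop) :
    limsupDist ((fun n => T^[n] x) ∘ k) q = limsupDist (fun n => T^[n] x) q := by
  have hanti : Antitone fun n => dist (T^[n] x) q := antitone_nat_of_succ_le fun n => by
    rw [Function.iterate_succ_apply']
    simpa only [hq] using hT (T^[n] x) q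
  have hlim := tendsto_atTop_ciInf hanti ⟨0, Set.forall_mem_range.2 fun _ => dist_nonneg⟩
  exact (hlim.comp hk).limsup_eq.trans hlim.limsup_eq.symm

/-- in a bounded complete uniform SR space, for a nonexpansive `T`,
the iterations sequence has a polar limit iff every polar limit of a subsequence of the
iterations is a fixed point of `T`. -/
theorem stmt_16 [CompleteSpace E] (hBdd : Bornology.IsBounded (Set.univ : Set E))
    (hSR : IsUniformSR E) (x : E) (T : E → E)
    (hT : ∀ u v : E, dist (T u) (T v) ≤ dist u v) :
    (∃ p : E, PolarLim (fun n => T^[n] x) p) ↔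
      (∀ k : ℕ → ℕ, StrictMono k → ∀ y : E, PolarLim (fun n => T^[k n] x) y → T y = y) := by
  have : BoundedSpace E := ⟨hBdd⟩
  set X : ℕ → E := fun n => T^[n] x
  constructor
  · rintro ⟨p, hp⟩ k hk y (hy : PolarLim (X ∘ k) y)
    obtain rfl : y = p := hy.asympCenter.eq hSR (hp.asympCenter_comp hk.tendsto_atTop)
    exact (asympCenter_orbit_map hT hp.asympCenter).eq hSR hp.asympCenter
  · intro hfix
    obtain ⟨k₀, hk₀, p, hp⟩ := exists_polarLim_subseq hSR X
    have hTp : T p = p := hfix k₀ hk₀ p hp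
    refine ⟨p, polarLim_of_forall_asympCenter hSR fun k hk u => ?_⟩
    obtain ⟨m, hm, w, hw⟩ := exists_polarLim_subseq hSR (X ∘ k)
    have hTw : T w = w := hfix (k ∘ m) (hk.comp hm) w hw
    calc limsupDist (X ∘ k) p
        = limsupDist (X ∘ k₀) p :=
          (limsupDist_orbit_comp_of_fixed hT x hTp hk.tendsto_atTop).trans
            (limsupDist_orbit_comp_of_fixed hT x hTp hk₀.tendsto_atTop).symm
      _ ≤ limsupDist (X ∘ k₀) w := hp.asympCenter w
      _ = limsupDist ((X ∘ k) ∘ m) w :=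
          (limsupDist_orbit_comp_of_fixed hT x hTw hk₀.tendsto_atTop).trans
            (limsupDist_orbit_comp_of_fixed hT x hTw (hk.comp hm).tendsto_atTop).symm
      _ ≤ limsupDist ((X ∘ k) ∘ m) u := hw.asympCenter u
      _ ≤ limsupDist (X ∘ k) u := limsupDist_comp_le (X ∘ k) u hm.tendsto_atTop
end
end
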